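/- For the Gaussian Sinkhorn iteration, the rescaled covariance matrices υ_{2n} := σ̄^{-1/2} τ_{2n} σ̄^{-1/2} and υ_{2n+1} := σ^{-1/2} τ_{2n+1} σ^{-1/2} satisfy the recursions υ_{2(n+1)}^{-1} = I + γ υ_{2n+1} γ' and υ_{2n+1}^{-1} = I + γ' υ_{2n} γ, where γ := σ̄^{1/2} τ^{-1} β σ^{1/2}; consequently, υ_{2(n+1)} = Ricc_ϖ(υ_{2n}) with ϖ = (γγ')^{-1}. -/

import Mathlib

open Matrix
open scoped Classical

/-- The principal symmetric positive semidefinite square root of a matrix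
(junk value `0` if the matrix is not positive semidefinite). -/
noncomputable def psqrt {d : ℕ} (A : Matrix (Fin d) (Fin d) ℝ) : Matrix (Fin d) (Fin d) ℝ :=
  if h : A.PosSemidef then
    (h.1.eigenvectorUnitary : Matrix (Fin d) (Fin d) ℝ) *
      diagonal ((↑) ∘ (fun i => Real.sqrt (h.1.eigenvalues i))) *
      (star h.1.eigenvectorUnitary : Matrix (Fin d) (Fin d) ℝ)
  else 0

/-! In the whitened coordinates `υ`, writing `K := τ0⁻¹ β0`, the gain identities turn the covariance
update `τ' = (σ⁻¹ + βᵀ τ⁻¹ β)⁻¹` into `υ'⁻¹ = σ^{1/2} (σ⁻¹ + Kᵀ τ K) σ^{1/2} = 1 + γᵀ υ γ`, and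
symmetrically for the other marginal with `Kᵀ` and `γᵀ`. Composing the two half-steps and using the
push-through identity `γ (1 + γᵀ v γ)⁻¹ γᵀ = ((γ γᵀ)⁻¹ + v)⁻¹` gives the Riccati form. All the
inverses involved exist because every `τ n` is positive definite, by induction along the iteration. -/

section CommRing

variable {n R : Type*} [Fintype n] [DecidableEq n] [CommRing R]

namespace Matrix

theorem inv_eq_of_eq_nonsing_inv {A B : Matrix n n R} (hA : IsUnit A.det) (h : A = B⁻¹) :
    A⁻¹ = B := by
  have hB : IsUnit B.det := isUnit_nonsing_inv_det_iff.mp (h ▸ hA)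
  rw [h, nonsing_inv_nonsing_inv B hB]

theorem isUnit_det_inv_mul_mul_inv {A T : Matrix n n R} (hA : IsUnit A.det)
    (hT : IsUnit T.det) : IsUnit (A⁻¹ * T * A⁻¹).det := by
  have hA' : IsUnit A⁻¹.det := isUnit_nonsing_inv_det_iff.mpr hA
  simpa only [det_mul] using (hA'.mul hT).mul hA'

theorem inv_mul_inv_add_mul_inv {S P : Matrix n n R} (hS : IsUnit S.det) (hP : S * S = P)
    (M : Matrix n n R) : S⁻¹ * (P⁻¹ + M)⁻¹ * S⁻¹ = (1 + S * M * S)⁻¹ := by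
  have h : S * (P⁻¹ + M) * S = 1 + S * M * S := by
    rw [← hP, mul_add, add_mul, mul_inv_rev, mul_assoc S, mul_assoc S⁻¹, nonsing_inv_mul S hS,
      mul_one, mul_nonsing_inv S hS]
  rw [← h]
  simp only [mul_inv_rev, mul_assoc]

theorem transpose_mul_inv_mul_mul {T : Matrix n n R} (hTsymm : Tᵀ = T) (hT : IsUnit T.det)
    (K : Matrix n n R) : (T * K)ᵀ * T⁻¹ * (T * K) = Kᵀ * T * K := by
  rw [transpose_mul, hTsymm, mul_assoc Kᵀ, mul_nonsing_inv T hT, mul_one, mul_assoc]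

theorem transpose_mul_inv_mul_mul_inv_mul {S Sb : Matrix n n R} (hS : Sᵀ = S) (hSb : Sbᵀ = Sb)
    (hSbu : IsUnit Sb.det) (K T : Matrix n n R) :
    (Sb * K * S)ᵀ * (Sb⁻¹ * T * Sb⁻¹) * (Sb * K * S) = S * (Kᵀ * T * K) * S := by
  simp only [transpose_mul, hS, hSb, mul_assoc, mul_nonsing_inv_cancel_left _ _ hSbu,
    nonsing_inv_mul_cancel_left _ _ hSbu]

theorem mul_inv_one_add_transpose_mul_mul {γ : Matrix n n R} (hγ : IsUnit γ.det)
    (v : Matrix n n R) : γ * (1 + γᵀ * v * γ)⁻¹ * γᵀ = ((γ * γᵀ)⁻¹ + v)⁻¹ := by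
  have hγt : IsUnit γᵀ.det := by rwa [det_transpose]
  have h : (γ * γᵀ)⁻¹ + v = γᵀ⁻¹ * (1 + γᵀ * v * γ) * γ⁻¹ := by
    rw [mul_add, mul_one, add_mul, mul_inv_rev, mul_assoc γᵀ, nonsing_inv_mul_cancel_left _ _ hγt,
      mul_nonsing_inv_cancel_right _ _ hγ]
  rw [h, mul_inv_rev, mul_inv_rev, nonsing_inv_nonsing_inv _ hγ, nonsing_inv_nonsing_inv _ hγt,
    ← mul_assoc]

end Matrix

end CommRing

namespace Matrix.PosDef

theorem transpose_eq {n : Type*} {A : Matrix n n ℝ} (hA : A.PosDef) : Aᵀ = A :=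
  (isHermitian_iff_isSymm.mp hA.isHermitian).eq

variable {n : Type*} [Fintype n] [DecidableEq n]

theorem isUnit_det {A : Matrix n n ℝ} (hA : A.PosDef) : IsUnit A.det :=
  (isUnit_iff_isUnit_det A).mp hA.isUnit

theorem inv_add_transpose_mul_inv_mul {P T : Matrix n n ℝ} (hP : P.PosDef) (hT : T.PosDef)
    (B : Matrix n n ℝ) : (P⁻¹ + Bᵀ * T⁻¹ * B)⁻¹.PosDef :=
  (hP.inv.add_posSemidef (hT.inv.posSemidef.conjTranspose_mul_mul_same B)).inv

end Matrix.PosDef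

theorem posDef_of_sinkhorn_updates {n : Type*} [Fintype n] [DecidableEq n]
    {σ σbar : Matrix n n ℝ} {β τ : ℕ → Matrix n n ℝ} (hσ : σ.PosDef) (hσbar : σbar.PosDef)
    (hτ0 : (τ 0).PosDef)
    (hτodd : ∀ k, τ (2 * k + 1) = (σ⁻¹ + (β (2 * k))ᵀ * (τ (2 * k))⁻¹ * β (2 * k))⁻¹)
    (hτeven : ∀ k, τ (2 * k + 2) =
      (σbar⁻¹ + (β (2 * k + 1))ᵀ * (τ (2 * k + 1))⁻¹ * β (2 * k + 1))⁻¹) :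
    ∀ m, (τ m).PosDef := by
  intro m
  induction m with
  | zero => exact hτ0
  | succ m ih =>
    obtain ⟨k, rfl | rfl⟩ := Nat.even_or_odd' m
    · rw [hτodd]; exact hσ.inv_add_transpose_mul_inv_mul ih _
    · rw [hτeven]; exact hσbar.inv_add_transpose_mul_inv_mul ih _

section psqrt

variable {d : ℕ}

theorem transpose_psqrt (A : Matrix (Fin d) (Fin d) ℝ) : (psqrt A)ᵀ = psqrt A := by
  unfold psqrt
  split_ifs
  · rw [← conjTranspose_eq_transpose_of_trivial]
    simp [star_eq_conjTranspose, mul_assoc]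
  · exact transpose_zero

theorem psqrt_mul_self {A : Matrix (Fin d) (Fin d) ℝ} (hA : A.PosSemidef) :
    psqrt A * psqrt A = A := by
  set U : Matrix (Fin d) (Fin d) ℝ := ↑hA.1.eigenvectorUnitary
  set D : Matrix (Fin d) (Fin d) ℝ := diagonal ((↑) ∘ (fun i => Real.sqrt (hA.1.eigenvalues i)))
  have hU : star U * U = 1 := mem_unitaryGroup_iff'.mp hA.1.eigenvectorUnitary.2
  have hD : D * D = diagonal (RCLike.ofReal ∘ hA.1.eigenvalues) := by
    simp [D, diagonal_mul_diagonal, Real.mul_self_sqrt (hA.eigenvalues_nonneg _)]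
  have hpsqrt : psqrt A = U * D * star U := by rw [psqrt, dif_pos hA]
  calc psqrt A * psqrt A = U * (D * (star U * U) * D) * star U := by
        simp only [hpsqrt, mul_assoc]
    _ = A := by
        rw [hU, mul_one, hD]
        conv_rhs => rw [hA.1.spectral_theorem, Unitary.conjStarAlgAut_apply]

theorem isUnit_det_psqrt {A : Matrix (Fin d) (Fin d) ℝ} (hA : A.PosDef) :
    IsUnit (psqrt A).det := by
  have h : (psqrt A).det * (psqrt A).det = A.det := by rw [← det_mul, psqrt_mul_self hA.posSemidef]
  exact isUnit_of_mul_isUnit_left (h ▸ hA.isUnit_det)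

/-- A half-step of the Sinkhorn covariance update with gain `T K`, in whitened coordinates. -/
theorem inv_psqrt_mul_inv_add_mul_inv_psqrt {σ σbar T : Matrix (Fin d) (Fin d) ℝ}
    (hσ : σ.PosDef) (hσbar : σbar.PosDef) (hT : T.PosDef) (K : Matrix (Fin d) (Fin d) ℝ) :
    (psqrt σ)⁻¹ * (σ⁻¹ + (T * K)ᵀ * T⁻¹ * (T * K))⁻¹ * (psqrt σ)⁻¹ =
      (1 + (psqrt σbar * K * psqrt σ)ᵀ * ((psqrt σbar)⁻¹ * T * (psqrt σbar)⁻¹) *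
        (psqrt σbar * K * psqrt σ))⁻¹ := by
  rw [transpose_mul_inv_mul_mul hT.transpose_eq hT.isUnit_det,
    inv_mul_inv_add_mul_inv (isUnit_det_psqrt hσ) (psqrt_mul_self hσ.posSemidef),
    transpose_mul_inv_mul_mul_inv_mul (transpose_psqrt σ) (transpose_psqrt σbar)
      (isUnit_det_psqrt hσbar)]

end psqrt

theorem gaussian_sinkhorn_riccati_recursion_general {d : ℕ}
    (σ σbar : Matrix (Fin d) (Fin d) ℝ) (hσ : σ.PosDef) (hσbar : σbar.PosDef)
    (β0 τ0 : Matrix (Fin d) (Fin d) ℝ) (hβ0 : IsUnit β0) (hτ0 : τ0.PosDef)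
    (β τ : ℕ → Matrix (Fin d) (Fin d) ℝ)
    (hτinit : τ 0 = τ0)
    (hgain_even : ∀ n, β (2 * n) = τ (2 * n) * τ0⁻¹ * β0)
    (hgain_odd : ∀ n, β (2 * n + 1) = τ (2 * n + 1) * β0ᵀ * τ0⁻¹)
    (hτodd : ∀ n, τ (2 * n + 1) = (σ⁻¹ + (β (2 * n))ᵀ * (τ (2 * n))⁻¹ * β (2 * n))⁻¹)
    (hτeven : ∀ n, τ (2 * n + 2) =
      (σbar⁻¹ + (β (2 * n + 1))ᵀ * (τ (2 * n + 1))⁻¹ * β (2 * n + 1))⁻¹)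
    (γ : Matrix (Fin d) (Fin d) ℝ) (hγ : γ = psqrt σbar * τ0⁻¹ * β0 * psqrt σ) :
    ∀ n : ℕ,
      ((psqrt σbar)⁻¹ * τ (2 * n + 2) * (psqrt σbar)⁻¹)⁻¹ =
        1 + γ * ((psqrt σ)⁻¹ * τ (2 * n + 1) * (psqrt σ)⁻¹) * γᵀ ∧
      ((psqrt σ)⁻¹ * τ (2 * n + 1) * (psqrt σ)⁻¹)⁻¹ =
        1 + γᵀ * ((psqrt σbar)⁻¹ * τ (2 * n) * (psqrt σbar)⁻¹) * γ ∧
      (psqrt σbar)⁻¹ * τ (2 * n + 2) * (psqrt σbar)⁻¹ =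
        (1 + ((γ * γᵀ)⁻¹ + (psqrt σbar)⁻¹ * τ (2 * n) * (psqrt σbar)⁻¹)⁻¹)⁻¹ := by
  have hτ := posDef_of_sinkhorn_updates hσ hσbar (hτinit ▸ hτ0) hτodd hτeven
  have hγK : γ = psqrt σbar * (τ0⁻¹ * β0) * psqrt σ := by rw [hγ, mul_assoc (psqrt σbar)]
  have hγKt : γᵀ = psqrt σ * (τ0⁻¹ * β0)ᵀ * psqrt σbar := by
    rw [hγK, transpose_mul, transpose_mul, transpose_psqrt, transpose_psqrt, mul_assoc]
  have hγunit : IsUnit γ.det := by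
    simpa only [hγ, det_mul] using ((isUnit_det_psqrt hσbar).mul
      (isUnit_nonsing_inv_det_iff.mpr hτ0.isUnit_det)).mul
      ((isUnit_iff_isUnit_det β0).mp hβ0) |>.mul (isUnit_det_psqrt hσ)
  intro n
  have hodd : (psqrt σ)⁻¹ * τ (2 * n + 1) * (psqrt σ)⁻¹ =
      (1 + γᵀ * ((psqrt σbar)⁻¹ * τ (2 * n) * (psqrt σbar)⁻¹) * γ)⁻¹ := by
    rw [hτodd, hgain_even, mul_assoc (τ _), hγK]
    exact inv_psqrt_mul_inv_add_mul_inv_psqrt hσ hσbar (hτ _) _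
  have heven : (psqrt σbar)⁻¹ * τ (2 * n + 2) * (psqrt σbar)⁻¹ =
      (1 + γ * ((psqrt σ)⁻¹ * τ (2 * n + 1) * (psqrt σ)⁻¹) * γᵀ)⁻¹ := by
    have hKt : β0ᵀ * τ0⁻¹ = (τ0⁻¹ * β0)ᵀ := by
      rw [transpose_mul, transpose_nonsing_inv, hτ0.transpose_eq]
    rw [hτeven, hgain_odd, mul_assoc (τ _), hKt, hγKt, ← transpose_transpose γ, hγKt]
    exact inv_psqrt_mul_inv_add_mul_inv_psqrt hσbar hσ (hτ _) _
  refine ⟨inv_eq_of_eq_nonsing_inv ?_ heven, inv_eq_of_eq_nonsing_inv ?_ hodd, ?_⟩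
  · exact isUnit_det_inv_mul_mul_inv (isUnit_det_psqrt hσbar) (hτ _).isUnit_det
  · exact isUnit_det_inv_mul_mul_inv (isUnit_det_psqrt hσ) (hτ _).isUnit_det
  rw [heven, hodd, mul_inv_one_add_transpose_mul_mul hγunit]

/-- For the Gaussian Sinkhorn iteration, the rescaled covariance matrices
`υ_{2n} := σbar^{-1/2} τ_{2n} σbar^{-1/2}` and `υ_{2n+1} := σ^{-1/2} τ_{2n+1} σ^{-1/2}`
satisfy the recursions `υ_{2(n+1)}⁻¹ = I + γ υ_{2n+1} γᵀ` and `υ_{2n+1}⁻¹ = I + γᵀ υ_{2n} γ`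
with `γ := σbar^{1/2} τ⁻¹ β σ^{1/2}`; consequently `υ_{2(n+1)} = Ricc_ϖ(υ_{2n})` with
`ϖ = (γγᵀ)⁻¹`. -/
theorem gaussian_sinkhorn_riccati_recursion {d : ℕ}
    (σ σbar : Matrix (Fin d) (Fin d) ℝ) (hσ : σ.PosDef) (hσbar : σbar.PosDef)
    (β0 τ0 : Matrix (Fin d) (Fin d) ℝ) (hβ0 : IsUnit β0) (hτ0 : τ0.PosDef)
    (β τ : ℕ → Matrix (Fin d) (Fin d) ℝ)
    (hβinit : β 0 = β0) (hτinit : τ 0 = τ0)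
    (hgain_even : ∀ n, β (2 * n) = τ (2 * n) * τ0⁻¹ * β0)
    (hgain_odd : ∀ n, β (2 * n + 1) = τ (2 * n + 1) * β0ᵀ * τ0⁻¹)
    (hτodd : ∀ n, τ (2 * n + 1) = (σ⁻¹ + (β (2 * n))ᵀ * (τ (2 * n))⁻¹ * β (2 * n))⁻¹)
    (hτeven : ∀ n, τ (2 * n + 2) =
      (σbar⁻¹ + (β (2 * n + 1))ᵀ * (τ (2 * n + 1))⁻¹ * β (2 * n + 1))⁻¹)
    (γ : Matrix (Fin d) (Fin d) ℝ) (hγ : γ = psqrt σbar * τ0⁻¹ * β0 * psqrt σ) :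
    ∀ n : ℕ,
      ((psqrt σbar)⁻¹ * τ (2 * n + 2) * (psqrt σbar)⁻¹)⁻¹ =
        1 + γ * ((psqrt σ)⁻¹ * τ (2 * n + 1) * (psqrt σ)⁻¹) * γᵀ ∧
      ((psqrt σ)⁻¹ * τ (2 * n + 1) * (psqrt σ)⁻¹)⁻¹ =
        1 + γᵀ * ((psqrt σbar)⁻¹ * τ (2 * n) * (psqrt σbar)⁻¹) * γ ∧
      (psqrt σbar)⁻¹ * τ (2 * n + 2) * (psqrt σbar)⁻¹ =
        (1 + ((γ * γᵀ)⁻¹ + (psqrt σbar)⁻¹ * τ (2 * n) * (psqrt σbar)⁻¹)⁻¹)⁻¹ :=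
  gaussian_sinkhorn_riccati_recursion_general σ σbar hσ hσbar β0 τ0 hβ0 hτ0 β τ hτinit hgain_even
    hgain_odd hτodd hτeven γ hγ
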